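/- arXiv:1610.05325 — 3 statements merged into one kernel-verified Lean document; each statement's English description precedes it below -/
import Mathlib

section
/- If x̂ ∈ I maximises ϑ(x)/ψ_r(x) over I, then for every x ≤ x̂ the hitting time τ_{x̂} is an optimal stopping time for the problem v(x). -/
open Filter Set Topology

noncomputable section

/-- The filter of real numbers tending to the (possibly infinite) boundary point `a ∈ [-∞,∞]`
from the right, i.e. "x → a, x > a". -/
def fromRight (a : EReal) : Filter ℝ :=
  Filter.comap (fun x : ℝ => (x : EReal)) (nhdsWithin a (Set.Ioi a))

/-- The filter of real numbers tending to the boundary point `b` from the left. -/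
def fromLeft (b : EReal) : Filter ℝ :=
  Filter.comap (fun x : ℝ => (x : EReal)) (nhdsWithin b (Set.Iio b))

/-- An abstract setup for optimal stopping of a regular one-dimensional diffusion
`X` on the interval `I = (a,b)` with natural boundaries, discount rate `r`, and
fundamental `r`-excessive functions `ψ_r` (increasing) and `φ_r` (decreasing).

`Stop` is the collection of stopping times of `X`; for a stopping time `τ`,
`E x τ ϑ` denotes the expected discounted reward `E^x[e^{-rτ} ϑ(X_τ) 1_{τ<∞}]`,
`P x τ S` denotes the probability `ℙ^x(X_τ ∈ S, τ < ∞)`, `hit y` is the first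
hitting time `τ_y = inf{t ≥ 0 : X_t = y}`, and `never` is the stopping time `τ ≡ ∞`. -/
structure Setup where
  a : EReal
  b : EReal
  hab : a < b
  r : ℝ
  hr : 0 < r
  psi : ℝ → ℝ
  phi : ℝ → ℝ
  Stop : Type
  never : Stop
  hit : ℝ → Stop
  E : ℝ → Stop → (ℝ → EReal) → EReal
  P : ℝ → Stop → Set ℝ → ENNReal
  psi_pos : ∀ ⦃x : ℝ⦄, a < ↑x → ↑x < b → 0 < psi x
  phi_pos : ∀ ⦃x : ℝ⦄, a < ↑x → ↑x < b → 0 < phi x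
  psi_cont : ContinuousOn psi {x : ℝ | a < ↑x ∧ ↑x < b}
  phi_cont : ContinuousOn phi {x : ℝ | a < ↑x ∧ ↑x < b}
  psi_mono : StrictMonoOn psi {x : ℝ | a < ↑x ∧ ↑x < b}
  phi_anti : StrictAntiOn phi {x : ℝ | a < ↑x ∧ ↑x < b}
  psi_lim_a : Filter.Tendsto psi (fromRight a) (nhds 0)
  psi_lim_b : Filter.Tendsto psi (fromLeft b) Filter.atTop
  phi_lim_b : Filter.Tendsto phi (fromLeft b) (nhds 0)
  phi_lim_a : Filter.Tendsto phi (fromRight a) Filter.atTop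
  psi_excessive : ∀ ⦃x : ℝ⦄, a < ↑x → ↑x < b → ∀ τ : Stop,
    E x τ (fun s => ((psi s : ℝ) : EReal)) ≤ ((psi x : ℝ) : EReal)
  phi_excessive : ∀ ⦃x : ℝ⦄, a < ↑x → ↑x < b → ∀ τ : Stop,
    E x τ (fun s => ((phi s : ℝ) : EReal)) ≤ ((phi x : ℝ) : EReal)
  E_never : ∀ (x : ℝ) (ϑ : ℝ → EReal), E x never ϑ = 0
  E_mono : ∀ (x : ℝ) (τ : Stop) (ϑ ϑ' : ℝ → EReal),
    (∀ s : ℝ, a < ↑s → ↑s < b → ϑ s ≤ ϑ' s) → E x τ ϑ ≤ E x τ ϑ'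
  E_smul : ∀ (x : ℝ) (τ : Stop) (c : ℝ) (ϑ : ℝ → EReal), 0 ≤ c →
    E x τ (fun s => (c : EReal) * ϑ s) = (c : EReal) * E x τ ϑ
  E_hit_lt : ∀ ⦃x y : ℝ⦄, a < ↑x → ↑y < b → x < y → ∀ ϑ : ℝ → EReal,
    E x (hit y) ϑ = ϑ y * ((psi x / psi y : ℝ) : EReal)
  E_hit_ge : ∀ ⦃x y : ℝ⦄, a < ↑y → ↑x < b → y ≤ x → ∀ ϑ : ℝ → EReal,
    E x (hit y) ϑ = ϑ y * ((phi x / phi y : ℝ) : EReal)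
  regular : ∀ ⦃x y : ℝ⦄, a < ↑x → ↑x < b → a < ↑y → ↑y < b →
    0 < P x (hit y) Set.univ

/-- Embedding of a real-valued payoff into `EReal`. -/
def toE (ϑ : ℝ → ℝ) : ℝ → EReal := fun s => ((ϑ s : ℝ) : EReal)

namespace Setup
variable (S : Setup)

/-- The state space `I = (a,b)`. -/
def I : Set ℝ := {x : ℝ | S.a < ↑x ∧ ↑x < S.b}

/-- The value function `v(x) = sup_τ E^x[e^{-rτ} ϑ(X_τ) 1_{τ<∞}]`. -/
def val (ϑ : ℝ → EReal) (x : ℝ) : EReal := ⨆ τ : S.Stop, S.E x τ ϑ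

/-- A stopping time `τ` is optimal for the problem `v(x)` if it attains the supremum. -/
def IsOptimal (ϑ : ℝ → EReal) (x : ℝ) (τ : S.Stop) : Prop :=
  S.E x τ ϑ = S.val ϑ x

/-- `L_c = limsup_{x→a} (−x)/φ_r(x)`. -/
def Lc : EReal := Filter.limsup (fun x : ℝ => ((-x / S.phi x : ℝ) : EReal)) (fromRight S.a)

end Setup

/-!
With `c = ϑ(x̂)/ψ_r(x̂) > 0` the payoff is dominated by `c ψ_r`, and `ψ_r` is `r`-excessive, so no
stopping time earns more than `c ψ_r(x)`. For `x ≤ x̂` the hitting time `τ_x̂` earns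
`ϑ(x̂) ψ_r(x)/ψ_r(x̂) = c ψ_r(x)`.
-/

namespace Setup
variable (S : Setup)

theorem isOptimal_iff {f : ℝ → EReal} {x : ℝ} {τ : S.Stop} :
    S.IsOptimal f x τ ↔ ∀ σ, S.E x σ f ≤ S.E x τ f :=
  ⟨fun h σ => h ▸ le_iSup (fun σ => S.E x σ f) σ,
    fun h => le_antisymm (le_iSup (fun σ => S.E x σ f) τ) (iSup_le h)⟩

theorem E_hit_of_le {x y : ℝ} (hx : x ∈ S.I) (hy : y ∈ S.I) (hxy : x ≤ y) (f : ℝ → EReal) :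
    S.E x (S.hit y) f = f y * ((S.psi x / S.psi y : ℝ) : EReal) := by
  rcases hxy.lt_or_eq with hlt | rfl
  · exact S.E_hit_lt hx.1 hy.2 hlt f
  · rw [S.E_hit_ge hx.1 hx.2 le_rfl f, div_self (S.phi_pos hx.1 hx.2).ne',
      div_self (S.psi_pos hx.1 hx.2).ne']

theorem E_le_of_le_mul_psi {f : ℝ → EReal} {c : ℝ} (hc : 0 ≤ c)
    (hf : ∀ s ∈ S.I, f s ≤ (c : EReal) * S.psi s) {x : ℝ} (hx : x ∈ S.I) (τ : S.Stop) :
    S.E x τ f ≤ (c : EReal) * S.psi x :=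
  calc S.E x τ f ≤ S.E x τ (fun s => (c : EReal) * S.psi s) :=
        S.E_mono x τ _ _ fun s hsa hsb => hf s ⟨hsa, hsb⟩
    _ = (c : EReal) * S.E x τ (fun s => (S.psi s : EReal)) := S.E_smul x τ c _ hc
    _ ≤ (c : EReal) * S.psi x :=
        mul_le_mul_of_nonneg_left (S.psi_excessive hx.1 hx.2 τ) (EReal.coe_nonneg.mpr hc)

end Setup

theorem maximiser_psi_optimal_general (S : Setup) (ϑ : ℝ → ℝ)
    (hsup : ∃ x ∈ S.I, 0 < ϑ x)
    (xhat : ℝ) (hxhat : xhat ∈ S.I)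
    (hmax : ∀ x ∈ S.I, ϑ x / S.psi x ≤ ϑ xhat / S.psi xhat) :
    ∀ x ∈ S.I, x ≤ xhat → S.IsOptimal (toE ϑ) x (S.hit xhat) := by
  intro x hx hxle
  set c := ϑ xhat / S.psi xhat
  have psi_pos : ∀ s ∈ S.I, 0 < S.psi s := fun s hs => S.psi_pos hs.1 hs.2
  have hc : 0 < c := by
    obtain ⟨x₀, hx₀, hϑx₀⟩ := hsup
    exact (div_pos hϑx₀ (psi_pos x₀ hx₀)).trans_le (hmax x₀ hx₀)
  have hdom : ∀ s ∈ S.I, toE ϑ s ≤ (c : EReal) * S.psi s := fun s hs => by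
    rw [toE, ← EReal.coe_mul, EReal.coe_le_coe_iff, ← div_le_iff₀ (psi_pos s hs)]
    exact hmax s hs
  have hhit : S.E x (S.hit xhat) (toE ϑ) = (c : EReal) * S.psi x := by
    rw [S.E_hit_of_le hx hxhat hxle, toE, ← EReal.coe_mul, ← EReal.coe_mul]
    congr 1
    ring
  rw [S.isOptimal_iff, hhit]
  exact S.E_le_of_le_mul_psi hc.le hdom hx

/-- Corollary 1 of the paper: if `x̂ ∈ I` maximises `ϑ/ψ_r` over `I`, then for
every `x ≤ x̂` in `I` the hitting time `τ_x̂` is optimal for the problem `v(x)`. -/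
theorem maximiser_psi_optimal (S : Setup) (ϑ : ℝ → ℝ) (hϑ : Measurable ϑ)
    (hsup : ∃ x ∈ S.I, 0 < ϑ x)
    (xhat : ℝ) (hxhat : xhat ∈ S.I)
    (hmax : ∀ x ∈ S.I, ϑ x / S.psi x ≤ ϑ xhat / S.psi xhat) :
    ∀ x ∈ S.I, x ≤ xhat → S.IsOptimal (toE ϑ) x (S.hit xhat) :=
  maximiser_psi_optimal_general S ϑ hsup xhat hxhat hmax

end
end

section
/- Define ζ_0 ≡ 0 and ζ_{n+1} = Tζ_n, where for ζ: I×(0,1]→[0,∞): Tζ(x,α) = sup_τ E^x[e^{−rτ}(−αX_τ + αp_c + h^ζ(X_τ,α))1_{τ<∞}] with h^ζ(x,α) = (αK_c + ζ(x*,Aα))·ψ_r(x)/ψ_r(x*) for x < x* and h^ζ(x,α) = αK_c + ζ(x,Aα) for x ≥ x*. Then for every n ≥ 0 and every α ∈ (0,1], ζ_n(x,α) = α·ζ̂_n(x), where ζ̂_n(x) := ζ_n(x,1); moreover ζ̂_n = T̂ⁿ0, where T̂ is the normalised optimal stopping operator. -/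
open Filter Set Topology

noncomputable section

/-- The single option payoff `h(x) = -x + p_c + K_c·ψ_r(x)/ψ_r(x*)` for `x < x*` and
`h(x) = -x + p_c + K_c` for `x ≥ x*`. -/
def hpay (S : Setup) (pc Kc xstar : ℝ) (x : ℝ) : ℝ :=
  if x < xstar then -x + pc + Kc * (S.psi x / S.psi xstar) else -x + pc + Kc

/-- Case A: `L_c ≤ h(x)/φ_r(x)` for some `x ∈ I`. -/
def caseA (S : Setup) (pc Kc xstar : ℝ) : Prop :=
  ∃ x ∈ S.I, S.Lc ≤ ((hpay S pc Kc xstar x / S.phi x : ℝ) : EReal)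

/-- Case B: `∞ > L_c > h(x)/φ_r(x)` for all `x ∈ I`. -/
def caseB (S : Setup) (pc Kc xstar : ℝ) : Prop :=
  S.Lc ≠ ⊤ ∧ ∀ x ∈ S.I, ((hpay S pc Kc xstar x / S.phi x : ℝ) : EReal) < S.Lc

/-- Case C: `L_c = ∞`. -/
def caseC (S : Setup) : Prop := S.Lc = ⊤

/-- The payoff `ĥ(x,ζ̂)` of the normalised lifetime problem with continuation value `ζ̂`:
`ĥ(x,ζ̂) = −x + p_c + (K_c + A·ζ̂(x*))·ψ_r(x)/ψ_r(x*)` for `x < x*`, and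
`ĥ(x,ζ̂) = −x + p_c + K_c + A·ζ̂(x)` for `x ≥ x*`. -/
def hhat (S : Setup) (pc Kc xstar A : ℝ) (ζ : ℝ → EReal) (x : ℝ) : EReal :=
  if x < xstar then
    ((-x + pc : ℝ) : EReal)
      + ((S.psi x / S.psi xstar : ℝ) : EReal) * (((Kc : ℝ) : EReal) + ((A : ℝ) : EReal) * ζ xstar)
  else ((-x + pc + Kc : ℝ) : EReal) + ((A : ℝ) : EReal) * ζ x

/-- The normalised optimal stopping operator `T̂ζ̂(x) = sup_τ E^x[e^{−rτ} ĥ(X_τ,ζ̂) 1_{τ<∞}]`. -/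
def That (S : Setup) (pc Kc xstar A : ℝ) (ζ : ℝ → EReal) : ℝ → EReal :=
  fun x => ⨆ τ : S.Stop, S.E x τ (hhat S pc Kc xstar A ζ)

/-- The iterate `T̂ⁿ0`. -/
def ThatIter (S : Setup) (pc Kc xstar A : ℝ) (n : ℕ) : ℝ → EReal :=
  (That S pc Kc xstar A)^[n] (fun _ => 0)

/-- The lifetime value function `V̂(x) = lim_{n→∞} T̂ⁿ0(x)`; since the iterates are monotone
in `n`, the limit is the (pointwise monotone) supremum. -/
def Vhat (S : Setup) (pc Kc xstar A : ℝ) (x : ℝ) : EReal :=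
  ⨆ n : ℕ, ThatIter S pc Kc xstar A n x

/-- An admissible continuation value: (real-valued) nonnegative on `I`, continuous on
`(a,x*]`, with `ζ̂/φ_r` nonincreasing on `[x*,b)`. -/
def Admissible (S : Setup) (xstar : ℝ) (ζ : ℝ → EReal) : Prop :=
  (∀ x ∈ S.I, 0 ≤ ζ x ∧ ζ x ≠ ⊤) ∧
  ContinuousOn ζ {x : ℝ | S.a < ↑x ∧ x ≤ xstar} ∧
  AntitoneOn (fun x => ζ x / ((S.phi x : ℝ) : EReal)) {x : ℝ | xstar ≤ x ∧ ↑x < S.b}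

/-- Regime (α): the lifetime value strictly dominates the single option value on `[x*,b)`. -/
def regimeAlpha (S : Setup) (pc Kc xstar A : ℝ) : Prop :=
  ∀ x ∈ S.I, xstar ≤ x →
    S.val (toE (hpay S pc Kc xstar)) x < Vhat S pc Kc xstar A x

/-- Regime (β): the lifetime value equals the single option value on `[x*,b)`
(including the case that both are infinite). -/
def regimeBeta (S : Setup) (pc Kc xstar A : ℝ) : Prop :=
  ∀ x ∈ S.I, xstar ≤ x →
    Vhat S pc Kc xstar A x = S.val (toE (hpay S pc Kc xstar)) x

/-- The payoff `h^ζ(x,α)` entering the two-argument (capacity-dependent) operator `T`. -/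
def hcont (S : Setup) (Kc xstar A : ℝ) (ζ : ℝ → ℝ → EReal) (x α : ℝ) : EReal :=
  if x < xstar then
    ((S.psi x / S.psi xstar : ℝ) : EReal) * (((α * Kc : ℝ) : EReal) + ζ xstar (A * α))
  else ((α * Kc : ℝ) : EReal) + ζ x (A * α)

/-- The two-argument optimal stopping operator
`Tζ(x,α) = sup_τ E^x[e^{−rτ}(−αX_τ + αp_c + h^ζ(X_τ,α)) 1_{τ<∞}]`. -/
def TwoArgOp (S : Setup) (pc Kc xstar A : ℝ) (ζ : ℝ → ℝ → EReal) : ℝ → ℝ → EReal :=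
  fun x α => ⨆ τ : S.Stop,
    S.E x τ (fun s => ((-(α * s) + α * pc : ℝ) : EReal) + hcont S Kc xstar A ζ s α)

/-- The iterate `ζ_n = Tⁿ0`. -/
def TopIter (S : Setup) (pc Kc xstar A : ℝ) (n : ℕ) : ℝ → ℝ → EReal :=
  (TwoArgOp S pc Kc xstar A)^[n] (fun _ _ => 0)

/-! If `ζ` is positively homogeneous in the capacity, `ζ(x,α) = α·ζ(x,1)`, then so is the payoff of
`T` at capacity `α`, because the continuation value enters at capacity `A·α`. Since `E^x` commutes
with positive scalars and so does the supremum over stopping times, `T` preserves homogeneity, and at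
capacity `1` its payoff is exactly `ĥ(·, ζ(·,1))`. Induction on `n` starting from `ζ_0 ≡ 0`. -/

namespace EReal

lemma mul_iSup_of_pos {ι : Sort*} {c : ℝ} (hc : 0 < c) (f : ι → EReal) :
    (c : EReal) * ⨆ i, f i = ⨆ i, (c : EReal) * f i := by
  have gc : GaloisConnection (fun x : EReal => (c : EReal) * x) (fun y => y / c) := fun x y => by
    rw [EReal.le_div_iff_mul_le (by exact_mod_cast hc) (coe_ne_top c), mul_comm]
  exact gc.l_iSup

lemma coe_mul_add_coe_mul_eq {α : ℝ} (hα : 0 ≤ α) (k A : ℝ) (z : EReal) :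
    ((α * k : ℝ) : EReal) + ((A * α : ℝ) : EReal) * z = (α : EReal) * ((k : EReal) + A * z) := by
  rw [left_distrib_of_nonneg_of_ne_top (by exact_mod_cast hα) (coe_ne_top α), coe_mul, coe_mul,
    ← mul_assoc, mul_comm (A : EReal)]

end EReal

def PosHomogeneous (ζ : ℝ → ℝ → EReal) : Prop :=
  ∀ x α : ℝ, 0 < α → ζ x α = (α : EReal) * ζ x 1

section Scaling

variable {S : Setup} {pc Kc xstar A : ℝ} {ζ : ℝ → ℝ → EReal}

lemma hcont_eq_mul (hζ : PosHomogeneous ζ) (hA : 0 < A) {α : ℝ} (hα : 0 < α) (s : ℝ) :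
    hcont S Kc xstar A ζ s α = (α : EReal) * hcont S Kc xstar A ζ s 1 := by
  unfold hcont
  split_ifs
  · rw [hζ xstar _ (mul_pos hA hα), hζ xstar _ (mul_pos hA one_pos), mul_left_comm,
      EReal.coe_mul_add_coe_mul_eq hα.le, one_mul, mul_one]
  · rw [hζ s _ (mul_pos hA hα), hζ s _ (mul_pos hA one_pos), EReal.coe_mul_add_coe_mul_eq hα.le,
      one_mul, mul_one]

lemma twoArgOp_posHomogeneous (hζ : PosHomogeneous ζ) (hA : 0 < A) :
    PosHomogeneous (TwoArgOp S pc Kc xstar A ζ) := by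
  intro x α hα
  have payoff_eq (s : ℝ) :
      ((-(α * s) + α * pc : ℝ) : EReal) + hcont S Kc xstar A ζ s α
        = (α : EReal) * (((-(1 * s) + 1 * pc : ℝ) : EReal) + hcont S Kc xstar A ζ s 1) := by
    rw [hcont_eq_mul hζ hA hα, EReal.left_distrib_of_nonneg_of_ne_top
      (by exact_mod_cast hα.le) (EReal.coe_ne_top α), ← EReal.coe_mul]
    ring_nf
  simp only [TwoArgOp, payoff_eq, S.E_smul x _ α _ hα.le, EReal.mul_iSup_of_pos hα]

lemma twoArgOp_one_eq_that (hζ : PosHomogeneous ζ) (hA : 0 < A) (x : ℝ) :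
    TwoArgOp S pc Kc xstar A ζ x 1 = That S pc Kc xstar A (fun y => ζ y 1) x := by
  refine iSup_congr fun τ => congrArg (S.E x τ) (funext fun s => ?_)
  unfold hcont hhat
  split_ifs
  · rw [hζ xstar _ (mul_pos hA one_pos)]
    simp only [one_mul, mul_one]
  · rw [hζ s _ (mul_pos hA one_pos)]
    simp only [one_mul, mul_one, EReal.coe_add, add_assoc]

lemma topIter_succ (n : ℕ) :
    TopIter S pc Kc xstar A (n + 1) = TwoArgOp S pc Kc xstar A (TopIter S pc Kc xstar A n) :=
  Function.iterate_succ_apply' _ _ _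

lemma thatIter_succ (n : ℕ) :
    ThatIter S pc Kc xstar A (n + 1) = That S pc Kc xstar A (ThatIter S pc Kc xstar A n) :=
  Function.iterate_succ_apply' _ _ _

end Scaling

theorem capacity_scaling_general (S : Setup) (pc Kc xstar A : ℝ)
    (hA : 0 < A) :
    ∀ n : ℕ, ∀ x ∈ S.I, ∀ α : ℝ, 0 < α → α ≤ 1 →
      TopIter S pc Kc xstar A n x α
        = ((α : ℝ) : EReal) * TopIter S pc Kc xstar A n x 1 ∧
      TopIter S pc Kc xstar A n x 1 = ThatIter S pc Kc xstar A n x := by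
  have homogeneous (n : ℕ) : PosHomogeneous (TopIter S pc Kc xstar A n) := by
    induction n with
    | zero => intro x α _; simp [TopIter]
    | succ n ih => rw [topIter_succ]; exact twoArgOp_posHomogeneous ih hA
  have at_one (n : ℕ) : (fun x => TopIter S pc Kc xstar A n x 1) = ThatIter S pc Kc xstar A n := by
    induction n with
    | zero => rfl
    | succ n ih =>
      funext x
      rw [thatIter_succ, topIter_succ, twoArgOp_one_eq_that (homogeneous n) hA, ih]
  intro n x _ α hα _
  exact ⟨homogeneous n x α hα, congrFun (at_one n) x⟩

/-- Lemma 4 of the paper: `ζ_n(x,α) = α·ζ̂_n(x)` with `ζ̂_n(x) = ζ_n(x,1)`,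
and `ζ̂_n = T̂ⁿ0` for the normalised optimal stopping operator `T̂`. -/
theorem capacity_scaling (S : Setup) (pc Kc xstar A : ℝ)
    (hpc : 0 ≤ pc) (hKc : 0 ≤ Kc) (hxstar : xstar ∈ S.I)
    (hA : 0 < A) (hA1 : A < 1) :
    ∀ n : ℕ, ∀ x ∈ S.I, ∀ α : ℝ, 0 < α → α ≤ 1 →
      TopIter S pc Kc xstar A n x α
        = ((α : ℝ) : EReal) * TopIter S pc Kc xstar A n x 1 ∧
      TopIter S pc Kc xstar A n x 1 = ThatIter S pc Kc xstar A n x :=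
  capacity_scaling_general S pc Kc xstar A hA

end
end

section
/- Assume conditions S1* and S2* hold. Then regime (β), i.e. V̂(x) = V_c(x) for all x ≥ x* (or both infinite), holds if and only if T̂²0(x) = T̂0(x) for all x ≥ x*. -/
open Filter Set Topology

noncomputable section

/-
The operator `T̂` is monotone, so the iterates `T̂ⁿ0` increase to `V̂`, and `T̂0 = V_c` because
`ĥ(·,0) = h`. Moreover `T̂ζ̂` only depends on `ζ̂` on `[x*,b)`: below `x*` the payoff reads `ζ̂`
at `x*` alone. Hence `T̂²0 = T̂0` on `[x*,b)` forces `T̂ⁿ0 = T̂0` there for every `n ≥ 1`, i.e.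
`V̂ = V_c` on `[x*,b)`; conversely `T̂0 ≤ T̂²0 ≤ V̂`.
-/

theorem Monotone.iSup_eq_iff_forall_ge {α : Type*} [CompleteLattice α] {f : ℕ → α}
    (hf : Monotone f) (k : ℕ) : ⨆ n, f n = f k ↔ ∀ n ≥ k, f n = f k := by
  refine ⟨fun h n hn => le_antisymm (h ▸ le_iSup f n) (hf hn), fun h => ?_⟩
  refine le_antisymm (iSup_le fun n => ?_) (le_iSup f k)
  rcases le_total n k with hn | hn
  · exact hf hn
  · exact (h n hn).le

theorem Function.eqOn_iterate_of_eqOn_iterate_two {α β : Type*} {T : (α → β) → α → β}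
    {K : Set α} (hT : ∀ ζ ζ', EqOn ζ ζ' K → T ζ = T ζ') {z : α → β}
    (h : EqOn (T^[2] z) (T z) K) {n : ℕ} (hn : 1 ≤ n) : EqOn (T^[n] z) (T z) K := by
  induction n, hn using Nat.le_induction with
  | base => exact fun _ _ => rfl
  | succ n _ ih => rwa [iterate_succ_apply', hT _ _ ih]

theorem Setup.E_congr (S : Setup) (x : ℝ) (τ : S.Stop) {ϑ ϑ' : ℝ → EReal}
    (h : EqOn ϑ ϑ' S.I) :
    S.E x τ ϑ = S.E x τ ϑ' :=
  le_antisymm (S.E_mono x τ _ _ fun _ hsa hsb => (h ⟨hsa, hsb⟩).le)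
    (S.E_mono x τ _ _ fun _ hsa hsb => (h ⟨hsa, hsb⟩).ge)

section Operator

variable {S : Setup} {pc Kc xstar A : ℝ}

theorem hhat_zero : hhat S pc Kc xstar A (fun _ => 0) = toE (hpay S pc Kc xstar) := by
  funext x
  unfold hhat toE hpay
  split
  · rw [mul_zero, add_zero, EReal.mul_comm, ← EReal.coe_mul, ← EReal.coe_add]
  · rw [mul_zero, add_zero]

theorem ThatIter_one : ThatIter S pc Kc xstar A 1 = S.val (toE (hpay S pc Kc xstar)) := by
  funext x
  simp only [ThatIter, Function.iterate_one, That, hhat_zero, Setup.val]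

theorem That_nonneg (ζ : ℝ → EReal) (x : ℝ) : 0 ≤ That S pc Kc xstar A ζ x :=
  (S.E_never x _).symm.le.trans (le_iSup (fun τ => S.E x τ (hhat S pc Kc xstar A ζ)) S.never)

theorem That_monotone (hxstar : xstar ∈ S.I) (hA : 0 ≤ A) :
    Monotone (That S pc Kc xstar A) := by
  intro ζ ζ' h x
  refine iSup_mono fun τ => S.E_mono x τ _ _ fun s hsa hsb => ?_
  have hA' : (0 : EReal) ≤ (A : EReal) := by exact_mod_cast hA
  unfold hhat
  split
  · have hratio : (0 : EReal) ≤ ((S.psi s / S.psi xstar : ℝ) : EReal) :=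
      EReal.coe_nonneg.2 (div_pos (S.psi_pos hsa hsb) (S.psi_pos hxstar.1 hxstar.2)).le
    gcongr
    exact h xstar
  · gcongr
    exact h s

theorem ThatIter_monotone (hxstar : xstar ∈ S.I) (hA : 0 ≤ A) :
    Monotone (ThatIter S pc Kc xstar A) :=
  (That_monotone hxstar hA).monotone_iterate_of_le_map fun x => That_nonneg _ x

theorem That_congr (hxstar : xstar ∈ S.I) (ζ ζ' : ℝ → EReal)
    (h : EqOn ζ ζ' {x | x ∈ S.I ∧ xstar ≤ x}) :
    That S pc Kc xstar A ζ = That S pc Kc xstar A ζ' := by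
  have hpayoff : EqOn (hhat S pc Kc xstar A ζ) (hhat S pc Kc xstar A ζ') S.I := by
    intro s hs
    unfold hhat
    split_ifs with hlt
    · rw [h ⟨hxstar, le_rfl⟩]
    · rw [h ⟨hs, not_lt.1 hlt⟩]
  funext x
  exact iSup_congr fun τ => S.E_congr x τ hpayoff

end Operator

theorem regime_beta_iff_general (S : Setup) (pc Kc xstar A : ℝ)
    (hxstar : xstar ∈ S.I)
    (hA0 : 0 < A) :
    regimeBeta S pc Kc xstar A ↔
      ∀ x ∈ S.I, xstar ≤ x →
        ThatIter S pc Kc xstar A 2 x = ThatIter S pc Kc xstar A 1 x := by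
  have hmono : ∀ x, Monotone fun n => ThatIter S pc Kc xstar A n x :=
    fun x _ _ hmn => ThatIter_monotone hxstar hA0.le hmn x
  simp only [regimeBeta, Vhat, ← ThatIter_one (A := A), (hmono _).iSup_eq_iff_forall_ge]
  refine ⟨fun h x hx hxx => h x hx hxx 2 one_le_two, fun h x hx hxx n hn => ?_⟩
  exact Function.eqOn_iterate_of_eqOn_iterate_two (That_congr hxstar)
    (fun y hy => h y hy.1 hy.2) hn ⟨hx, hxx⟩

/-- Corollary 5 of the paper: regime (β) holds if and only if
`T̂²0(x) = T̂0(x)` for all `x ≥ x*`. -/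
theorem regime_beta_iff (S : Setup) (pc Kc xstar A : ℝ)
    (hpc : 0 ≤ pc) (hKc : 0 ≤ Kc) (hxstar : xstar ∈ S.I)
    (hA0 : 0 < A) (hA1 : A < 1)
    (hS1 : ∃ x ∈ S.I, 0 < hpay S pc Kc xstar x)
    (hS2 : pc + Kc < xstar) :
    regimeBeta S pc Kc xstar A ↔
      ∀ x ∈ S.I, xstar ≤ x →
        ThatIter S pc Kc xstar A 2 x = ThatIter S pc Kc xstar A 1 x :=
  regime_beta_iff_general S pc Kc xstar A hxstar hA0
end
end
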